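/- Suppose 0 < π(A) ≤ 1/2, and with A_{k/4} := {y ∈ A : p(y, Aᶜ) ≥ k/4}, suppose C := A \ A_{k/4} satisfies π(C) ≥ δ π(A) for some δ > 0, where k := inf k(A') > 0. Then k_2(A) ≥ (k²/16) δ. -/

import Mathlib

open MeasureTheory ProbabilityTheory

/-- The `n`-step transition kernel (`n`-fold composition of `κ`). -/
noncomputable def kpow {Ω : Type*} [MeasurableSpace Ω] (κ : Kernel Ω Ω) : ℕ → Kernel Ω Ω
  | 0 => Kernel.id
  | n + 1 => (kpow κ n) ∘ₖ κ

/-- The probability flow out of the set `A`: `∫_A p(x, Aᶜ) π(dx)`. -/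
noncomputable def flow {Ω : Type*} [MeasurableSpace Ω] (κ : Kernel Ω Ω) (π : Measure Ω)
    (A : Set Ω) : ℝ :=
  (∫⁻ x in A, κ x Aᶜ ∂π).toReal

/-- The isoperimetric quantity `k(A) = (1/(π(A)π(Aᶜ))) ∫_A p(x, Aᶜ) π(dx)`. -/
noncomputable def isoQ {Ω : Type*} [MeasurableSpace Ω] (κ : Kernel Ω Ω) (π : Measure Ω)
    (A : Set Ω) : ℝ :=
  flow κ π A / ((π A).toReal * (π Aᶜ).toReal)

/-- Reversibility: `π(dx)p(x,dy) = π(dy)p(y,dx)`. -/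
def Reversible {Ω : Type*} [MeasurableSpace Ω] (κ : Kernel Ω Ω) (π : Measure Ω) : Prop :=
  ∀ A B : Set Ω, MeasurableSet A → MeasurableSet B →
    ∫⁻ x in A, κ x B ∂π = ∫⁻ x in B, κ x A ∂π

/-- `k_n := inf over A with 0 < π(A) < 1 of k_n(A)`, the `n`-step isoperimetric constant. -/
noncomputable def kinfN {Ω : Type*} [MeasurableSpace Ω] (κ : Kernel Ω Ω) (π : Measure Ω)
    (n : ℕ) : ℝ :=
  sInf ((fun A => isoQ (kpow κ n) π A) ''
    {A : Set Ω | MeasurableSet A ∧ 0 < π A ∧ π A < 1})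

/-- `K := sup over A with 0 < π(A) < 1 of k(A)`. -/
noncomputable def Ksup {Ω : Type*} [MeasurableSpace Ω] (κ : Kernel Ω Ω) (π : Measure Ω) : ℝ :=
  sSup ((fun A => isoQ κ π A) ''
    {A : Set Ω | MeasurableSet A ∧ 0 < π A ∧ π A < 1})

/-! Let `B` be the set of points of `A` that leave `A` in one step with probability at least
`k/4`, and `C = A \ B`. As `π(C) ≤ 1/2`, the isoperimetric constant gives a one-step flow out of
`C` of at least `k π(C)/2`. At most `k π(C)/4` of it goes directly to `Aᶜ`, so at least
`k π(C)/4` goes into `B`, from where a second step reaches `Aᶜ` with probability at least `k/4`.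
Hence the two-step flow out of `A` is at least `(k²/16) π(C) ≥ (k²/16) δ π(A)`. -/

open scoped ENNReal

section

variable {Ω : Type*} [MeasurableSpace Ω]

lemma kpow_one (κ : Kernel Ω Ω) : kpow κ 1 = κ := by
  simp [kpow, Kernel.id_comp]

lemma kpow_two (κ : Kernel Ω Ω) : kpow κ 2 = κ ∘ₖ κ := by
  rw [kpow, kpow_one]

lemma isoQ_nonneg (κ : Kernel Ω Ω) (π : Measure Ω) (A : Set Ω) : 0 ≤ isoQ κ π A :=
  div_nonneg ENNReal.toReal_nonneg (by positivity)

lemma kinfN_nonneg (κ : Kernel Ω Ω) (π : Measure Ω) (n : ℕ) : 0 ≤ kinfN κ π n :=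
  Real.sInf_nonneg fun _ ⟨_, _, hA⟩ => hA ▸ isoQ_nonneg _ _ _

lemma kinfN_le_isoQ (κ : Kernel Ω Ω) (π : Measure Ω) (n : ℕ) {A : Set Ω}
    (hA : MeasurableSet A) (h0 : 0 < π A) (h1 : π A < 1) :
    kinfN κ π n ≤ isoQ (kpow κ n) π A :=
  csInf_le ⟨0, fun _ ⟨_, _, hB⟩ => hB ▸ isoQ_nonneg _ _ _⟩ ⟨A, ⟨hA, h0, h1⟩, rfl⟩

lemma setLIntegral_kernel_ne_top (κ : Kernel Ω Ω) [IsMarkovKernel κ] (π : Measure Ω)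
    [IsFiniteMeasure π] (T s : Set Ω) : ∫⁻ x in T, κ x s ∂π ≠ ∞ :=
  ne_top_of_le_ne_top (measure_ne_top π T) <|
    (lintegral_mono fun _ => prob_le_one).trans_eq (setLIntegral_one T)

lemma flow_div_le_isoQ (κ : Kernel Ω Ω) (π : Measure Ω) [IsProbabilityMeasure π] {A : Set Ω}
    (hA : MeasurableSet A) (h1 : π A < 1) : flow κ π A / (π A).toReal ≤ isoQ κ π A := by
  rcases (ENNReal.toReal_nonneg (a := π A)).eq_or_lt with h0 | h0
  · rw [← h0, div_zero]
    exact isoQ_nonneg κ π A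
  have hAc_pos : 0 < (π Aᶜ).toReal := by
    rw [prob_compl_eq_one_sub hA]
    exact ENNReal.toReal_pos (tsub_pos_of_lt h1).ne' (ENNReal.sub_ne_top ENNReal.one_ne_top)
  refine div_le_div_of_nonneg_left ENNReal.toReal_nonneg (by positivity) ?_
  exact mul_le_of_le_one_right ENNReal.toReal_nonneg
    (ENNReal.toReal_le_of_le_ofReal zero_le_one (by simpa using prob_le_one))

lemma ofReal_half_kinfN_mul_le_setLIntegral_compl (κ : Kernel Ω Ω) [IsMarkovKernel κ]
    (π : Measure Ω) [IsProbabilityMeasure π] {C : Set Ω} (hC : MeasurableSet C)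
    (hC2 : π C ≤ 1 / 2) :
    ENNReal.ofReal (kinfN κ π 1 / 2) * π C ≤ ∫⁻ x in C, κ x Cᶜ ∂π := by
  rcases eq_zero_or_pos (π C) with h0 | h0
  · simp [h0]
  have hC_pos : 0 < (π C).toReal := ENNReal.toReal_pos h0.ne' (measure_ne_top π C)
  have hCc : 1 / 2 ≤ (π Cᶜ).toReal := by
    have h := ENNReal.toReal_mono (by norm_num) hC2
    rw [prob_compl_eq_one_sub hC,
      ENNReal.toReal_sub_of_le (hC2.trans (by norm_num)) ENNReal.one_ne_top]
    norm_num at h ⊢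
    linarith
  have hk := kinfN_le_isoQ κ π 1 hC h0 (hC2.trans_lt (by norm_num))
  rw [kpow_one, isoQ, le_div_iff₀ (by positivity)] at hk
  have hflow : kinfN κ π 1 / 2 * (π C).toReal ≤ flow κ π C := by
    nlinarith [mul_le_mul_of_nonneg_left hCc (mul_nonneg (kinfN_nonneg κ π 1) hC_pos.le)]
  rw [← ENNReal.ofReal_toReal (setLIntegral_kernel_ne_top κ π C Cᶜ),
    ← ENNReal.ofReal_toReal (measure_ne_top π C),
    ← ENNReal.ofReal_mul (by linarith [kinfN_nonneg κ π 1])]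
  exact ENNReal.ofReal_le_ofReal hflow

lemma measure_compl_sdiff (μ : Measure Ω) {A B : Set Ω} (hA : MeasurableSet A) (hBA : B ⊆ A) :
    μ (A \ B)ᶜ = μ B + μ Aᶜ := by
  rw [Set.compl_sdiff, measure_union (Set.disjoint_compl_right_iff_subset.mpr hBA) hA.compl]

lemma mul_measure_le_comp_apply {κ η : Kernel Ω Ω} {B S : Set Ω} (hB : MeasurableSet B)
    (hS : MeasurableSet S) {c : ℝ≥0∞} (h : ∀ y ∈ B, c ≤ η y S) (x : Ω) :
    c * κ x B ≤ (η ∘ₖ κ) x S :=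
  calc c * κ x B = ∫⁻ _ in B, c ∂κ x := (setLIntegral_const B c).symm
    _ ≤ ∫⁻ y in B, η y S ∂κ x := setLIntegral_mono' hB h
    _ ≤ ∫⁻ y, η y S ∂κ x := setLIntegral_le_lintegral B _
    _ = (η ∘ₖ κ) x S := (Kernel.comp_apply' η κ x hS).symm

lemma mul_measure_sdiff_le_setLIntegral (κ : Kernel Ω Ω) (π : Measure Ω) {A B : Set Ω}
    (hA : MeasurableSet A) (hB : MeasurableSet B) (hBA : B ⊆ A) {c : ℝ≥0∞}
    (hc : c * π (A \ B) ≠ ∞) (hsmall : ∀ y ∈ A \ B, κ y Aᶜ ≤ c)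
    (hesc : 2 * c * π (A \ B) ≤ ∫⁻ x in A \ B, κ x (A \ B)ᶜ ∂π) :
    c * π (A \ B) ≤ ∫⁻ x in A \ B, κ x B ∂π := by
  have hsplit : ∫⁻ x in A \ B, κ x (A \ B)ᶜ ∂π
      = ∫⁻ x in A \ B, κ x B ∂π + ∫⁻ x in A \ B, κ x Aᶜ ∂π := by
    simp_rw [measure_compl_sdiff _ hA hBA]
    exact lintegral_add_left (κ.measurable_coe hB) _
  have hout : ∫⁻ x in A \ B, κ x Aᶜ ∂π ≤ c * π (A \ B) :=
    (setLIntegral_mono' (hA.diff hB) hsmall).trans_eq (setLIntegral_const _ c)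
  refine ENNReal.le_of_add_le_add_right hc ?_
  calc c * π (A \ B) + c * π (A \ B) = 2 * c * π (A \ B) := by ring
    _ ≤ _ := hesc.trans (by rw [hsplit]; gcongr)

lemma mul_mul_measure_sdiff_le_setLIntegral_comp (κ : Kernel Ω Ω) (π : Measure Ω)
    {A B : Set Ω}
    (hA : MeasurableSet A) (hB : MeasurableSet B) (hBA : B ⊆ A) {c : ℝ≥0∞}
    (hc : c * π (A \ B) ≠ ∞) (hlarge : ∀ y ∈ B, c ≤ κ y Aᶜ)
    (hsmall : ∀ y ∈ A \ B, κ y Aᶜ ≤ c)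
    (hesc : 2 * c * π (A \ B) ≤ ∫⁻ x in A \ B, κ x (A \ B)ᶜ ∂π) :
    c * (c * π (A \ B)) ≤ ∫⁻ x in A, (κ ∘ₖ κ) x Aᶜ ∂π :=
  calc c * (c * π (A \ B)) ≤ c * ∫⁻ x in A \ B, κ x B ∂π :=
        mul_le_mul_right (mul_measure_sdiff_le_setLIntegral κ π hA hB hBA hc hsmall hesc) c
    _ = ∫⁻ x in A \ B, c * κ x B ∂π := (lintegral_const_mul c (κ.measurable_coe hB)).symm
    _ ≤ ∫⁻ x in A \ B, (κ ∘ₖ κ) x Aᶜ ∂π :=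
        lintegral_mono (mul_measure_le_comp_apply hB hA.compl hlarge)
    _ ≤ ∫⁻ x in A, (κ ∘ₖ κ) x Aᶜ ∂π := lintegral_mono_set Set.sdiff_subset


/-- The set `A_r` of the paper. -/
def escapeSet (κ : Kernel Ω Ω) (A : Set Ω) (r : ℝ) : Set Ω :=
  {y ∈ A | r ≤ (κ y Aᶜ).toReal}

lemma measurableSet_escapeSet (κ : Kernel Ω Ω) {A : Set Ω} (hA : MeasurableSet A) (r : ℝ) :
    MeasurableSet (escapeSet κ A r) :=
  hA.inter (measurableSet_le measurable_const (κ.measurable_coe hA.compl).ennreal_toReal)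

lemma mul_mul_measure_le_flow_kpow_two (κ : Kernel Ω Ω) [IsMarkovKernel κ] (π : Measure Ω)
    [IsFiniteMeasure π] {A : Set Ω} (hA : MeasurableSet A) {r : ℝ} (hr : 0 ≤ r)
    (hesc : ENNReal.ofReal (2 * r) * π (A \ escapeSet κ A r) ≤
      ∫⁻ x in A \ escapeSet κ A r, κ x (A \ escapeSet κ A r)ᶜ ∂π) :
    r * (r * (π (A \ escapeSet κ A r)).toReal) ≤ flow (kpow κ 2) π A := by
  have hlarge : ∀ y ∈ escapeSet κ A r, ENNReal.ofReal r ≤ κ y Aᶜ := fun y hy =>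
    (ENNReal.ofReal_le_iff_le_toReal (measure_ne_top _ _)).mpr hy.2
  have hsmall : ∀ y ∈ A \ escapeSet κ A r, κ y Aᶜ ≤ ENNReal.ofReal r := fun y hy =>
    (ENNReal.le_ofReal_iff_toReal_le (measure_ne_top _ _) hr).mpr
      (not_le.mp fun h => hy.2 ⟨hy.1, h⟩).le
  rw [ENNReal.ofReal_mul zero_le_two, ENNReal.ofReal_ofNat] at hesc
  have key := mul_mul_measure_sdiff_le_setLIntegral_comp κ π hA
    (measurableSet_escapeSet κ hA r) (fun _ hy => hy.1) (by finiteness) hlarge hsmall hesc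
  rw [flow, kpow_two]
  simpa [ENNReal.toReal_mul, ENNReal.toReal_ofReal hr] using
    ENNReal.toReal_mono (setLIntegral_kernel_ne_top _ π A Aᶜ) key

end

theorem k2_lower_bound_case_one_general {Ω : Type*} [MeasurableSpace Ω] (κ : Kernel Ω Ω)
    [IsMarkovKernel κ] (π : Measure Ω) [IsProbabilityMeasure π]
    (A : Set Ω) (hA : MeasurableSet A) (h0 : 0 < π A) (h12 : π A ≤ 1 / 2)
    (δ : ℝ)
    (hC : (π (A \ {y ∈ A | kinfN κ π 1 / 4 ≤ (κ y Aᶜ).toReal})).toReal ≥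
      δ * (π A).toReal) :
    isoQ (kpow κ 2) π A ≥ (kinfN κ π 1) ^ 2 / 16 * δ := by
  set k := kinfN κ π 1
  change (π (A \ escapeSet κ A (k / 4))).toReal ≥ δ * (π A).toReal at hC
  have hk : 0 ≤ k := kinfN_nonneg κ π 1
  have hflow : k / 4 * (k / 4 * (π (A \ escapeSet κ A (k / 4))).toReal) ≤
      flow (kpow κ 2) π A := by
    refine mul_mul_measure_le_flow_kpow_two κ π hA (by positivity) ?_
    convert ofReal_half_kinfN_mul_le_setLIntegral_compl κ π
      (hA.diff (measurableSet_escapeSet κ hA _)) ((measure_mono Set.sdiff_subset).trans h12)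
      using 3
    ring
  have hA_pos : 0 < (π A).toReal := ENNReal.toReal_pos h0.ne' (measure_ne_top π A)
  calc isoQ (kpow κ 2) π A ≥ flow (kpow κ 2) π A / (π A).toReal :=
        flow_div_le_isoQ _ π hA (h12.trans_lt (by norm_num))
    _ ≥ k / 4 * (k / 4 * (π (A \ escapeSet κ A (k / 4))).toReal) / (π A).toReal := by gcongr
    _ ≥ k / 4 * (k / 4 * (δ * (π A).toReal)) / (π A).toReal := by gcongr
    _ = k ^ 2 / 16 * δ := by field_simp; ring

/-- First case of the main lemma: if `π(C) ≥ δ π(A)` where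
`C = A \ A_{k/4}`, then `k₂(A) ≥ (k²/16) δ`. -/
theorem k2_lower_bound_case_one {Ω : Type*} [MeasurableSpace Ω] (κ : Kernel Ω Ω)
    [IsMarkovKernel κ] (π : Measure Ω) [IsProbabilityMeasure π]
    (hinv : ∀ B : Set Ω, MeasurableSet B → π B = ∫⁻ x, κ x B ∂π)
    (hrev : Reversible κ π)
    (hk : 0 < kinfN κ π 1)
    (A : Set Ω) (hA : MeasurableSet A) (h0 : 0 < π A) (h12 : π A ≤ 1 / 2)
    (δ : ℝ) (hδ : 0 < δ)
    (hC : (π (A \ {y ∈ A | kinfN κ π 1 / 4 ≤ (κ y Aᶜ).toReal})).toReal ≥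
      δ * (π A).toReal) :
    isoQ (kpow κ 2) π A ≥ (kinfN κ π 1) ^ 2 / 16 * δ :=
  k2_lower_bound_case_one_general κ π A hA h0 h12 δ hC
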